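/- arXiv:1310.8378 — 3 statements merged into one kernel-verified Lean document; each statement's English description precedes it below -/
import Mathlib

section
/- For all positive integers k and n, m(n,J_k) ≤ 2k⁴·C(k²,k)·n, where C(k²,k) is the binomial coefficient 'k² choose k'. -/
open Filter

/-- A binary matrix `A` contains a binary matrix `P` (as a submatrix pattern):
there are strictly increasing choices of rows and columns such that `A` has a
one wherever `P` does. -/
def ContainsMat {k l m n : ℕ} (P : Fin k → Fin l → Bool) (A : Fin m → Fin n → Bool) : Prop :=
  ∃ (r : Fin k → Fin m) (c : Fin l → Fin n), StrictMono r ∧ StrictMono c ∧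
    ∀ i j, P i j = true → A (r i) (c j) = true

/-- The permutation matrix of a permutation of `{1,…,k}`. -/
def permMatrix {k : ℕ} (π : Equiv.Perm (Fin k)) : Fin k → Fin k → Bool :=
  fun i j => decide (π i = j)

/-- The mass of a binary matrix: the number of its one-entries. -/
def mass {m n : ℕ} (A : Fin m → Fin n → Bool) : ℕ :=
  (Finset.univ.filter fun p : Fin m × Fin n => A p.1 p.2 = true).card

/-- A binary matrix avoids a permutation if it avoids its permutation matrix. -/
def AvoidsPerm {k m n : ℕ} (A : Fin m → Fin n → Bool) (π : Equiv.Perm (Fin k)) : Prop :=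
  ¬ ContainsMat (permMatrix π) A

/-- `ex n π`: the maximum mass of an `n × n` binary matrix avoiding `π`. -/
noncomputable def exP {k : ℕ} (n : ℕ) (π : Equiv.Perm (Fin k)) : ℕ :=
  sSup {m | ∃ A : Fin n → Fin n → Bool, AvoidsPerm A π ∧ mass A = m}

/-- `ex n U` for a set `U` of permutations: the maximum mass of an `n × n`
binary matrix avoiding every permutation in `U`. -/
noncomputable def exU {k : ℕ} (n : ℕ) (U : Finset (Equiv.Perm (Fin k))) : ℕ :=
  sSup {m | ∃ A : Fin n → Fin n → Bool, (∀ π ∈ U, AvoidsPerm A π) ∧ mass A = m}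

/-- An `n`-permutation `σ` contains a `k`-permutation `π`. -/
def PermContains {n k : ℕ} (σ : Equiv.Perm (Fin n)) (π : Equiv.Perm (Fin k)) : Prop :=
  ∃ x : Fin k → Fin n, StrictMono x ∧ ∀ i j, σ (x i) < σ (x j) ↔ π i < π j

/-- `S n π`: the number of `n`-permutations avoiding `π`. -/
noncomputable def SP {k : ℕ} (n : ℕ) (π : Equiv.Perm (Fin k)) : ℕ :=
  Nat.card {σ : Equiv.Perm (Fin n) // ¬ PermContains σ π}

/-- `S n U`: the number of `n`-permutations avoiding every permutation in `U`. -/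
noncomputable def SU {k : ℕ} (n : ℕ) (U : Finset (Equiv.Perm (Fin k))) : ℕ :=
  Nat.card {σ : Equiv.Perm (Fin n) // ∀ π ∈ U, ¬ PermContains σ π}

/-- `T n π`: the number of `n × n` binary matrices avoiding `π`. -/
noncomputable def TP {k : ℕ} (n : ℕ) (π : Equiv.Perm (Fin k)) : ℕ :=
  Nat.card {A : Fin n → Fin n → Bool // AvoidsPerm A π}

/-- `P` is an interval minor of `A`: there are ordered disjoint row intervals
`[rlo a, rhi a]` and column intervals `[clo b, chi b]` such that wherever `P`
has a one, the corresponding block of `A` contains a one. -/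
def IntervalMinor {k l m n : ℕ} (P : Fin k → Fin l → Bool) (A : Fin m → Fin n → Bool) : Prop :=
  ∃ (rlo rhi : Fin k → Fin m) (clo chi : Fin l → Fin n),
    (∀ a, rlo a ≤ rhi a) ∧ (∀ a b, a < b → rhi a < rlo b) ∧
    (∀ a, clo a ≤ chi a) ∧ (∀ a b, a < b → chi a < clo b) ∧
    ∀ a b, P a b = true → ∃ i j, rlo a ≤ i ∧ i ≤ rhi a ∧ clo b ≤ j ∧ j ≤ chi b ∧ A i j = true

/-- The all-ones `k × l` binary matrix. -/
def J (k l : ℕ) : Fin k → Fin l → Bool := fun _ _ => true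

/-- `m n P`: the maximum mass of an `n × n` binary matrix avoiding `P` as an
interval minor. -/
noncomputable def mP {k l : ℕ} (n : ℕ) (P : Fin k → Fin l → Bool) : ℕ :=
  sSup {m | ∃ A : Fin n → Fin n → Bool, ¬ IntervalMinor P A ∧ mass A = m}

/-- `f_P(t,s)`: the supremum (in `ℕ∞`) of those `N` for which there is an
`N × t` binary matrix with at least `s` ones in each row avoiding `P` as an
interval minor. -/
noncomputable def fP {k l : ℕ} (P : Fin k → Fin l → Bool) (t s : ℕ) : ℕ∞ :=
  sSup {x : ℕ∞ | ∃ N : ℕ, x = (N : ℕ∞) ∧ ∃ A : Fin N → Fin t → Bool,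
    (∀ i, s ≤ (Finset.univ.filter fun j => A i j = true).card) ∧ ¬ IntervalMinor P A}

/-- `g_P(t,s)`: the supremum (in `ℕ∞`) of those `N` for which there is a
`t × N` binary matrix with at least `s` ones in each column avoiding `P` as an
interval minor. -/
noncomputable def gP {k l : ℕ} (P : Fin k → Fin l → Bool) (t s : ℕ) : ℕ∞ :=
  sSup {x : ℕ∞ | ∃ N : ℕ, x = (N : ℕ∞) ∧ ∃ A : Fin t → Fin N → Bool,
    (∀ j, s ≤ (Finset.univ.filter fun i => A i j = true).card) ∧ ¬ IntervalMinor P A}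

/-! Cut the matrix into `k² × k²` blocks. Call a block wide if at least `k` of its columns
carry a one. If a column of blocks contained more than `(k - 1) C(k², k)` wide blocks,
pigeonhole over the `C(k², k)` sets of `k` columns would give `k` row blocks sharing `k`
columns, that is, a `J_k` interval minor; symmetrically for tall blocks. Every other block has
at most `(k - 1)²` ones and is nonzero only where the contracted `⌈n / k²⌉ × ⌈n / k²⌉` matrix
has a one, and that matrix still avoids `J_k`. Induction on `n` closes the recursion with the
constant `2 k⁴ C(k², k)`, since `⌈n / k²⌉ (k - 1) k ≤ n` once `n > 2 k⁴`. -/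

open Finset Function

section IntervalMinor

variable {k l m n m' n' : ℕ}

theorem IntervalMinor.of_containsMat {P : Fin k → Fin l → Bool} {A : Fin m → Fin n → Bool}
    (h : ContainsMat P A) : IntervalMinor P A := by
  obtain ⟨r, c, hr, hc, h⟩ := h
  exact ⟨r, r, c, c, fun _ => le_rfl, fun _ _ hab => hr hab, fun _ => le_rfl,
    fun _ _ hab => hc hab, fun a b hab => ⟨r a, c b, le_rfl, le_rfl, le_rfl, le_rfl, h a b hab⟩⟩

theorem IntervalMinor.transpose {P : Fin k → Fin l → Bool} {A : Fin m → Fin n → Bool}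
    (h : IntervalMinor P A) : IntervalMinor (fun b a => P a b) (fun j i => A i j) := by
  obtain ⟨rlo, rhi, clo, chi, h1, h2, h3, h4, h5⟩ := h
  refine ⟨clo, chi, rlo, rhi, h3, h4, h1, h2, fun b a hab => ?_⟩
  obtain ⟨i, j, hi, hi', hj, hj', hA⟩ := h5 a b hab
  exact ⟨j, i, hj, hj', hi, hi', hA⟩

theorem exists_intervals_comap {f : Fin m → Fin m'} (hf : Monotone f) (hfs : Surjective f)
    (lo hi : Fin k → Fin m') (hlohi : ∀ a, lo a ≤ hi a) (hdisj : ∀ a b, a < b → hi a < lo b) :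
    ∃ lo' hi' : Fin k → Fin m, (∀ a, lo' a ≤ hi' a) ∧ (∀ a b, a < b → hi' a < lo' b) ∧
      ∀ a p, (lo' a ≤ p ∧ p ≤ hi' a ↔ lo a ≤ f p ∧ f p ≤ hi a) := by
  have hlo : ∀ i : Fin m', ∃ p, ∀ q, p ≤ q ↔ i ≤ f q := by
    intro i
    set s := univ.filter fun q => i ≤ f q
    have hs : s.Nonempty := let ⟨p, hp⟩ := hfs i; ⟨p, by simp [s, hp]⟩
    refine ⟨s.min' hs, fun q => ⟨fun h => ?_, fun h => min'_le _ _ (by simpa [s] using h)⟩⟩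
    exact (mem_filter.1 (min'_mem s hs)).2.trans (hf h)
  have hhi : ∀ i : Fin m', ∃ p, ∀ q, q ≤ p ↔ f q ≤ i := by
    intro i
    set s := univ.filter fun q => f q ≤ i
    have hs : s.Nonempty := let ⟨p, hp⟩ := hfs i; ⟨p, by simp [s, hp]⟩
    refine ⟨s.max' hs, fun q => ⟨fun h => ?_, fun h => le_max' _ _ (by simpa [s] using h)⟩⟩
    exact (hf h).trans (mem_filter.1 (max'_mem s hs)).2
  choose plo hplo using hlo
  choose phi hphi using hhi
  refine ⟨plo ∘ lo, phi ∘ hi, fun a => ?_, fun a b hab => ?_, fun a p => ?_⟩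
  · obtain ⟨p, hp⟩ := hfs (lo a)
    exact ((hplo _ p).2 hp.ge).trans ((hphi _ p).2 (hp ▸ hlohi a))
  · by_contra hle
    have hlo_b := (hplo (lo b) _).1 le_rfl
    have hhi_a := (hphi (hi a) _).1 (not_lt.1 hle)
    exact (hdisj a b hab).not_ge (hlo_b.trans hhi_a)
  · exact and_congr (hplo _ p) (hphi _ p)

def contract (f : Fin m → Fin m') (g : Fin n → Fin n') (A : Fin m → Fin n → Bool) :
    Fin m' → Fin n' → Bool :=
  fun i j => decide (∃ p q, f p = i ∧ g q = j ∧ A p q = true)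

theorem IntervalMinor.of_contract {P : Fin k → Fin l → Bool} {A : Fin m → Fin n → Bool}
    {f : Fin m → Fin m'} {g : Fin n → Fin n'} (hf : Monotone f) (hfs : Surjective f)
    (hg : Monotone g) (hgs : Surjective g) (h : IntervalMinor P (contract f g A)) :
    IntervalMinor P A := by
  obtain ⟨rlo, rhi, clo, chi, h1, h2, h3, h4, h5⟩ := h
  obtain ⟨rlo', rhi', h1', h2', hr⟩ := exists_intervals_comap hf hfs rlo rhi h1 h2
  obtain ⟨clo', chi', h3', h4', hc⟩ := exists_intervals_comap hg hgs clo chi h3 h4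
  refine ⟨rlo', rhi', clo', chi', h1', h2', h3', h4', fun a b hab => ?_⟩
  obtain ⟨i, j, hi, hi', hj, hj', hB⟩ := h5 a b hab
  obtain ⟨p, q, rfl, rfl, hA⟩ := of_decide_eq_true hB
  obtain ⟨hp, hp'⟩ := (hr a p).2 ⟨hi, hi'⟩
  obtain ⟨hq, hq'⟩ := (hc b q).2 ⟨hj, hj'⟩
  exact ⟨p, q, hp, hp', hq, hq', hA⟩

end IntervalMinor

section Blocks

variable {k m n m' : ℕ}

def colSupport (f : Fin m → Fin m') (A : Fin m → Fin n → Bool) (i : Fin m') : Finset (Fin n) :=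
  {q | ∃ p, f p = i ∧ A p q = true}

theorem card_filter_subset_colSupport_lt {f : Fin m → Fin m'} (hf : Monotone f)
    (hfs : Surjective f) {A : Fin m → Fin n → Bool} (hA : ¬ IntervalMinor (J k k) A)
    {S : Finset (Fin n)} (hS : #S = k) : #{i | S ⊆ colSupport f A i} < k := by
  by_contra! h
  obtain ⟨I, hI, hIk⟩ := exists_subset_card_eq h
  refine hA (.of_contract hf hfs monotone_id surjective_id (.of_containsMat ?_))
  refine ⟨I.orderEmbOfFin hIk, S.orderEmbOfFin hS, (I.orderEmbOfFin hIk).strictMono,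
    (S.orderEmbOfFin hS).strictMono, fun a b _ => ?_⟩
  have hsub := (mem_filter.1 (hI (I.orderEmbOfFin_mem hIk a))).2 (S.orderEmbOfFin_mem hS b)
  obtain ⟨p, hp, hpq⟩ := (mem_filter.1 hsub).2
  exact decide_eq_true ⟨p, _, hp, rfl, hpq⟩

/-- Pigeonhole over the `k`-subsets of `G`. -/
theorem card_wide_blocks_le {f : Fin m → Fin m'} (hf : Monotone f) (hfs : Surjective f)
    {A : Fin m → Fin n → Bool} (hA : ¬ IntervalMinor (J k k) A) {K : ℕ} {G : Finset (Fin n)}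
    (hG : #G ≤ K) : #{i | k ≤ #(colSupport f A i ∩ G)} ≤ (k - 1) * K.choose k := by
  calc #{i | k ≤ #(colSupport f A i ∩ G)}
      ≤ #((G.powersetCard k).biUnion fun S => {i | S ⊆ colSupport f A i}) := by
        refine card_le_card fun i hi => ?_
        obtain ⟨S, hS, hSk⟩ := exists_subset_card_eq (mem_filter.1 hi).2
        exact mem_biUnion.2 ⟨S, mem_powersetCard.2 ⟨hS.trans inter_subset_right, hSk⟩,
          mem_filter.2 ⟨mem_univ _, hS.trans inter_subset_left⟩⟩
    _ ≤ ∑ S ∈ G.powersetCard k, #{i | S ⊆ colSupport f A i} := card_biUnion_le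
    _ ≤ ∑ S ∈ G.powersetCard k, (k - 1) := sum_le_sum fun S hS =>
        Nat.le_sub_one_of_lt (card_filter_subset_colSupport_lt hf hfs hA (mem_powersetCard.1 hS).2)
    _ ≤ (k - 1) * K.choose k := by
        rw [sum_const, card_powersetCard, smul_eq_mul, mul_comm]
        exact Nat.mul_le_mul_left _ (Nat.choose_le_choose k hG)

theorem card_block_le (f : Fin n → Fin m) {K : ℕ} (hK : ∀ i, #{p | f p = i} ≤ K)
    (A : Fin n → Fin n → Bool) (i j : Fin m) :
    #({x ∈ {x : Fin n × Fin n | A x.1 x.2 = true} | (f x.1, f x.2) = (i, j)} : Finset _) ≤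
      (if k ≤ #(colSupport f A i ∩ ({q | f q = j} : Finset _)) then K ^ 2 else 0) +
      (if k ≤ #(colSupport f (fun q p => A p q) j ∩ ({p | f p = i} : Finset _)) then K ^ 2 else 0) +
      (if contract f f A i j = true then (k - 1) ^ 2 else 0) := by
  set block : Finset _ := {x ∈ {x : Fin n × Fin n | A x.1 x.2 = true} | (f x.1, f x.2) = (i, j)}
  have hmem : ∀ x, x ∈ block ↔ A x.1 x.2 = true ∧ f x.1 = i ∧ f x.2 = j := by
    simp [block, Prod.ext_iff]
  have hsq : #block ≤ K ^ 2 := by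
    calc #block ≤ #(({p | f p = i} : Finset _) ×ˢ ({q | f q = j} : Finset _)) :=
          card_le_card fun x hx => by simp_all
      _ ≤ K ^ 2 := by rw [card_product, sq]; exact Nat.mul_le_mul (hK i) (hK j)
  have hthin : #block ≤ #(colSupport f (fun q p => A p q) j ∩ ({p | f p = i} : Finset _)) *
      #(colSupport f A i ∩ ({q | f q = j} : Finset _)) := by
    rw [← card_product]
    refine card_le_card fun x hx => ?_
    obtain ⟨hA, hi, hj⟩ := (hmem x).1 hx
    simp only [mem_product, mem_inter, colSupport, mem_filter, mem_univ, true_and]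
    exact ⟨⟨⟨x.2, hj, hA⟩, hi⟩, ⟨x.1, hi, hA⟩, hj⟩
  have hcontract : block.Nonempty → contract f f A i j = true := fun ⟨x, hx⟩ =>
    let ⟨hA, hi, hj⟩ := (hmem x).1 hx; decide_eq_true ⟨x.1, x.2, hi, hj, hA⟩
  by_cases hw : k ≤ #(colSupport f A i ∩ ({q | f q = j} : Finset _))
  · simp only [if_pos hw]; omega
  by_cases ht : k ≤ #(colSupport f (fun q p => A p q) j ∩ ({p | f p = i} : Finset _))
  · simp only [if_pos ht]; omega
  simp only [if_neg hw, if_neg ht, zero_add]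
  split_ifs with hc
  · exact hthin.trans (sq (k - 1) ▸ Nat.mul_le_mul (by omega) (by omega))
  · simp [not_nonempty_iff_eq_empty.1 (mt hcontract hc)]

theorem sum_sum_ite_le {ι κ : Type*} [Fintype ι] [Fintype κ] {P : ι → κ → Prop}
    [∀ i, DecidablePred (P i)] {N : ℕ} (hP : ∀ i, #{j | P i j} ≤ N) (c : ℕ) :
    ∑ i, ∑ j, (if P i j then c else 0) ≤ Fintype.card ι * N * c := by
  calc ∑ i, ∑ j, (if P i j then c else 0) = ∑ i, #{j | P i j} * c := by simp [sum_ite]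
    _ ≤ ∑ _i : ι, N * c := sum_le_sum fun i _ => Nat.mul_le_mul_right c (hP i)
    _ = Fintype.card ι * N * c := by simp [mul_assoc]

theorem mass_le_of_blocks {f : Fin n → Fin m} (hf : Monotone f) (hfs : Surjective f) {K : ℕ}
    (hK : ∀ i, #{p | f p = i} ≤ K) {A : Fin n → Fin n → Bool} (hA : ¬ IntervalMinor (J k k) A) :
    mass A ≤ 2 * (m * ((k - 1) * K.choose k) * K ^ 2) + (k - 1) ^ 2 * mass (contract f f A) := by
  have hAt : ¬ IntervalMinor (J k k) (fun q p => A p q) := fun h => hA h.transpose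
  have hwide : ∑ i, ∑ j, (if k ≤ #(colSupport f A i ∩ ({q | f q = j} : Finset _))
      then K ^ 2 else 0) ≤ m * ((k - 1) * K.choose k) * K ^ 2 := by
    rw [sum_comm]
    simpa using sum_sum_ite_le (fun j => card_wide_blocks_le hf hfs hA (hK j)) (K ^ 2)
  have htall : ∑ i, ∑ j, (if k ≤ #(colSupport f (fun q p => A p q) j ∩ ({p | f p = i} : Finset _))
      then K ^ 2 else 0) ≤ m * ((k - 1) * K.choose k) * K ^ 2 := by
    simpa using sum_sum_ite_le (fun i => card_wide_blocks_le hf hfs hAt (hK i)) (K ^ 2)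
  have hcontract : ∑ i, ∑ j, (if contract f f A i j = true then (k - 1) ^ 2 else 0) =
      (k - 1) ^ 2 * mass (contract f f A) := by
    rw [mass, card_filter, Fintype.sum_prod_type, mul_sum]
    simp only [mul_sum, mul_ite, mul_one, mul_zero]
  calc mass A = ∑ i, ∑ j, #({x ∈ {x : Fin n × Fin n | A x.1 x.2 = true} |
        (f x.1, f x.2) = (i, j)} : Finset _) := by
        rw [mass, card_eq_sum_card_fiberwise fun x _ => mem_coe.2 (mem_univ (f x.1, f x.2)),
          Fintype.sum_prod_type]
    _ ≤ _ := sum_le_sum fun i _ => sum_le_sum fun j _ => card_block_le (k := k) f hK A i j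
    _ ≤ _ := by simp only [sum_add_distrib]; omega

end Blocks

theorem exists_monotone_surjective_card_fiber_le {K : ℕ} (hK : 0 < K) (n : ℕ) :
    ∃ m, n ≤ m * K ∧ m * K < n + K ∧ ∃ f : Fin n → Fin m,
      Monotone f ∧ Surjective f ∧ ∀ i, #{p | f p = i} ≤ K := by
  set m := (n + K - 1) / K
  have hm₁ : m * K ≤ n + K - 1 := Nat.div_mul_le_self _ _
  have hm₂ : n + K - 1 < m * K + K := Nat.lt_div_mul_add hK
  refine ⟨m, by omega, by omega, fun p => ⟨p / K, (Nat.div_lt_iff_lt_mul hK).2 (by omega)⟩,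
    fun p q h => Nat.div_le_div_right h, fun i => ?_, fun i => ?_⟩
  · have hi := Nat.mul_le_mul_right K (Nat.succ_le_of_lt i.2)
    rw [Nat.succ_mul] at hi
    replace hi : i * K < n := by omega
    exact ⟨⟨i * K, hi⟩, Fin.ext (Nat.mul_div_cancel _ hK)⟩
  · calc _ ≤ #(Ico (i * K) (i * K + K)) := by
          refine card_le_card_of_injOn Fin.val (fun p hp => ?_) Fin.val_injective.injOn
          have hp : (p : ℕ) / K = i := by simpa [Fin.ext_iff] using hp
          have := Nat.div_mul_le_self p K
          have := Nat.lt_div_mul_add (a := p) hK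
          simp only [coe_Ico, Set.mem_Ico]
          constructor <;> simp_all
      _ = K := by simp

theorem mass_le_mul {m n : ℕ} (A : Fin m → Fin n → Bool) : mass A ≤ m * n :=
  (card_filter_le _ _).trans (by simp)

theorem block_count_bounds {k n m : ℕ} (hk : 2 ≤ k) (hn : 2 * k ^ 4 < n) (h₁ : n ≤ m * k ^ 2)
    (h₂ : m * k ^ 2 < n + k ^ 2) : m < n ∧ m * (k - 1) * k ≤ n := by
  obtain ⟨j, rfl⟩ : ∃ j, k = j + 2 := ⟨k - 2, by omega⟩
  have hm : (j + 2) ^ 2 < m := by nlinarith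
  constructor
  · nlinarith
  · rw [show j + 2 - 1 = j + 1 by omega]
    nlinarith

theorem mass_le_of_not_intervalMinor_J {k : ℕ} (hk : 2 ≤ k) {n : ℕ} (A : Fin n → Fin n → Bool)
    (hA : ¬ IntervalMinor (J k k) A) : mass A ≤ 2 * k ^ 4 * (k ^ 2).choose k * n := by
  induction n using Nat.strong_induction_on with
  | _ n ih =>
    set c := 2 * k ^ 4 * (k ^ 2).choose k
    have hC : 1 ≤ (k ^ 2).choose k := Nat.choose_pos (Nat.le_self_pow two_ne_zero k)
    by_cases hn : n ≤ c
    · exact (mass_le_mul A).trans (Nat.mul_le_mul_right n hn)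
    obtain ⟨m, h₁, h₂, f, hf, hfs, hK⟩ :=
      exists_monotone_surjective_card_fiber_le (K := k ^ 2) (by positivity) n
    have hn' : 2 * k ^ 4 < n := by have := Nat.le_mul_of_pos_right (2 * k ^ 4) hC; omega
    obtain ⟨hmn, hm⟩ := block_count_bounds hk hn' h₁ h₂
    have hB := ih m hmn (contract f f A) fun h => hA (h.of_contract hf hfs hf hfs)
    calc mass A ≤ 2 * (m * ((k - 1) * (k ^ 2).choose k) * (k ^ 2) ^ 2) +
          (k - 1) ^ 2 * mass (contract f f A) := mass_le_of_blocks hf hfs hK hA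
      _ ≤ 2 * (m * ((k - 1) * (k ^ 2).choose k) * (k ^ 2) ^ 2) + (k - 1) ^ 2 * (c * m) := by
          gcongr
      _ = c * (m * (k - 1) * k) := by
          obtain ⟨j, rfl⟩ : ∃ j, k = j + 1 := ⟨k - 1, by omega⟩
          simp only [c, Nat.add_sub_cancel]
          ring
      _ ≤ c * n := by gcongr

theorem mass_eq_zero_of_not_intervalMinor_J_one {m n : ℕ} {A : Fin m → Fin n → Bool}
    (hA : ¬ IntervalMinor (J 1 1) A) : mass A = 0 := by
  refine card_eq_zero.2 (filter_eq_empty_iff.2 fun x _ hx => hA (.of_containsMat ?_))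
  exact ⟨fun _ => x.1, fun _ => x.2, Subsingleton.strictMono _, Subsingleton.strictMono _,
    fun _ _ _ => hx⟩

theorem stmt16_general (k n : ℕ) (hk : 0 < k) :
    mP n (J k k) ≤ 2 * k ^ 4 * Nat.choose (k ^ 2) k * n := by
  refine csSup_le' ?_
  rintro _ ⟨A, hA, rfl⟩
  obtain rfl | hk := (Nat.succ_le_of_lt hk).eq_or_lt
  · simp [mass_eq_zero_of_not_intervalMinor_J_one hA]
  · exact mass_le_of_not_intervalMinor_J hk A hA

/-- For all positive integers `k` and `n`,
`m(n,J_k) ≤ 2k⁴·C(k²,k)·n`. -/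
theorem stmt16 (k n : ℕ) (hk : 0 < k) (hn : 0 < n) :
    mP n (J k k) ≤ 2 * k ^ 4 * Nat.choose (k ^ 2) k * n :=
  stmt16_general k n hk
end

section
/- For all positive integers r, k, s, t with k ≥ 2, s ≤ t and t even, the inequality f_{r,k}(t,s) ≤ 2·f_{r,k}(t/2,s) + 2·f_{r,k−1}(t/2,⌈s/2⌉) holds (as an inequality of extended natural numbers). -/
open Filter

/-! Split the columns into a left and a right half. A row with at least `s` ones has `s` ones
in one half, or else `⌈s/2⌉` ones in one half and at least one in the other. Restricted to the
relevant half, the rows of each of these four kinds avoid `J r k` in the first case and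
`J r (k - 1)` in the second: there the other half supplies one more column interval meeting
every row, so a `J r (k - 1)` minor would extend to a `J r k` minor of the whole matrix. -/

open Finset

theorem IntervalMinor.of_submatrix {k l M N m n : ℕ} {P : Fin k → Fin l → Bool}
    {A : Fin M → Fin N → Bool} {er : Fin m → Fin M} {ec : Fin n → Fin N}
    (her : StrictMono er) (hec : StrictMono ec)
    (h : IntervalMinor P fun i j => A (er i) (ec j)) : IntervalMinor P A := by
  obtain ⟨rlo, rhi, clo, chi, hr_le, hr_lt, hc_le, hc_lt, hblock⟩ := h
  refine ⟨er ∘ rlo, er ∘ rhi, ec ∘ clo, ec ∘ chi, fun a => her.monotone (hr_le a),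
    fun a b hab => her (hr_lt a b hab), fun a => hec.monotone (hc_le a),
    fun a b hab => hec (hc_lt a b hab), fun a b hab => ?_⟩
  obtain ⟨i, j, hi₁, hi₂, hj₁, hj₂, hA⟩ := hblock a b hab
  exact ⟨er i, ec j, her.monotone hi₁, her.monotone hi₂, hec.monotone hj₁, hec.monotone hj₂,
    hA⟩

theorem IntervalMinor.allOnes_succ_of_natAdd {r k m n M : ℕ} (hr : 0 < r)
    {A : Fin M → Fin (m + n) → Bool} (hrow : ∀ i, ∃ j, A i (Fin.natAdd m j) = true)
    (h : IntervalMinor (J r k) fun i j => A i (Fin.castAdd n j)) :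
    IntervalMinor (J r (k + 1)) A := by
  obtain ⟨rlo, rhi, clo, chi, hr_le, hr_lt, hc_le, hc_lt, hblock⟩ := h
  obtain ⟨⟨j₀, hn⟩, -⟩ := hrow (rlo ⟨0, hr⟩)
  refine ⟨rlo, rhi, Fin.snoc (fun b => Fin.castAdd n (clo b)) (Fin.natAdd m ⟨0, by omega⟩),
    Fin.snoc (fun b => Fin.castAdd n (chi b)) (Fin.natAdd m ⟨n - 1, by omega⟩),
    hr_le, hr_lt, fun b => ?_, fun a b hab => ?_, fun a b _ => ?_⟩
  · induction b using Fin.lastCases with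
    | last => simp [Fin.le_def]
    | cast b => simpa using (Fin.strictMono_castAdd n).monotone (hc_le b)
  · induction b using Fin.lastCases with
    | last =>
      induction a using Fin.lastCases with
      | last => exact absurd hab (lt_irrefl _)
      | cast a => simp [Fin.lt_def]
    | cast b =>
      induction a using Fin.lastCases with
      | last => exact absurd hab (Fin.castSucc_lt_last b).not_gt
      | cast a =>
        simpa using Fin.strictMono_castAdd n (hc_lt a b (Fin.castSucc_lt_castSucc_iff.1 hab))
  · induction b using Fin.lastCases with
    | last =>
      obtain ⟨j, hj⟩ := hrow (rlo a)
      exact ⟨rlo a, Fin.natAdd m j, le_rfl, hr_le a, by simp [Fin.le_def],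
        by simp [Fin.le_def]; omega, hj⟩
    | cast b =>
      obtain ⟨i, j, hi₁, hi₂, hj₁, hj₂, hA⟩ := hblock a b rfl
      exact ⟨i, Fin.castAdd n j, hi₁, hi₂, by simpa using (Fin.strictMono_castAdd n).monotone hj₁,
        by simpa using (Fin.strictMono_castAdd n).monotone hj₂, hA⟩

theorem IntervalMinor.allOnes_succ_of_castAdd {r k m n M : ℕ} (hr : 0 < r)
    {A : Fin M → Fin (m + n) → Bool} (hrow : ∀ i, ∃ j, A i (Fin.castAdd n j) = true)
    (h : IntervalMinor (J r k) fun i j => A i (Fin.natAdd m j)) :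
    IntervalMinor (J r (k + 1)) A := by
  obtain ⟨rlo, rhi, clo, chi, hr_le, hr_lt, hc_le, hc_lt, hblock⟩ := h
  obtain ⟨⟨j₀, hm⟩, -⟩ := hrow (rlo ⟨0, hr⟩)
  refine ⟨rlo, rhi, Fin.cons (Fin.castAdd n ⟨0, by omega⟩) (fun b => Fin.natAdd m (clo b)),
    Fin.cons (Fin.castAdd n ⟨m - 1, by omega⟩) (fun b => Fin.natAdd m (chi b)),
    hr_le, hr_lt, fun b => ?_, fun a b hab => ?_, fun a b _ => ?_⟩
  · induction b using Fin.cases with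
    | zero => simp [Fin.le_def]
    | succ b => simpa using hc_le b
  · induction a using Fin.cases with
    | zero =>
      induction b using Fin.cases with
      | zero => exact absurd hab (lt_irrefl _)
      | succ b => simp [Fin.lt_def]; omega
    | succ a =>
      induction b using Fin.cases with
      | zero => exact absurd hab (Fin.succ_pos a).not_gt
      | succ b => simpa using hc_lt a b (Fin.succ_lt_succ_iff.1 hab)
  · induction b using Fin.cases with
    | zero =>
      obtain ⟨j, hj⟩ := hrow (rlo a)
      exact ⟨rlo a, Fin.castAdd n j, le_rfl, hr_le a, by simp [Fin.le_def],
        by simp [Fin.le_def]; omega, hj⟩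
    | succ b =>
      obtain ⟨i, j, hi₁, hi₂, hj₁, hj₂, hA⟩ := hblock a b rfl
      exact ⟨i, Fin.natAdd m j, hi₁, hi₂, by simpa using hj₁, by simpa using hj₂, hA⟩

theorem card_filter_univ_add {m n : ℕ} (p : Fin (m + n) → Prop) [DecidablePred p] :
    #{j | p j} = #{j : Fin m | p (Fin.castAdd n j)} + #{j : Fin n | p (Fin.natAdd m j)} := by
  simp only [card_filter]
  exact Fin.sum_univ_add _

theorem card_le_fP {k l N u s : ℕ} {P : Fin k → Fin l → Bool} {B : Fin N → Fin u → Bool}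
    (S : Finset (Fin N)) (hrow : ∀ i ∈ S, s ≤ #{j | B i j = true})
    (havoid : ∀ e : Fin #S → Fin N, StrictMono e → (∀ i, e i ∈ S) →
      ¬ IntervalMinor P fun i j => B (e i) j) :
    (#S : ℕ∞) ≤ fP P u s :=
  le_sSup ⟨#S, rfl, fun i j => B (S.orderEmbOfFin rfl i) j,
    fun i => hrow _ (S.orderEmbOfFin_mem rfl i),
    havoid _ (S.orderEmbOfFin rfl).strictMono (S.orderEmbOfFin_mem rfl)⟩

theorem fP_allOnes_add_le {r k m n s : ℕ} (hr : 0 < r) :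
    fP (J r (k + 1)) (m + n) s ≤ fP (J r (k + 1)) m s + fP (J r (k + 1)) n s
      + fP (J r k) m ((s + 1) / 2) + fP (J r k) n ((s + 1) / 2) := by
  refine sSup_le ?_
  rintro _ ⟨N, rfl, A, hrow, hA⟩
  let left (i : Fin N) : ℕ := #{j : Fin m | A i (Fin.castAdd n j) = true}
  let right (i : Fin N) : ℕ := #{j : Fin n | A i (Fin.natAdd m j) = true}
  let S₁ : Finset (Fin N) := {i | s ≤ left i}
  let S₂ : Finset (Fin N) := {i | s ≤ right i}
  let S₃ : Finset (Fin N) := {i | (s + 1) / 2 ≤ left i ∧ 0 < right i}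
  let S₄ : Finset (Fin N) := {i | (s + 1) / 2 ≤ right i ∧ 0 < left i}
  have hcover : univ ⊆ S₁ ∪ S₂ ∪ S₃ ∪ S₄ := by
    intro i _
    have hi := hrow i
    rw [card_filter_univ_add] at hi
    simp only [S₁, S₂, S₃, S₄, left, right, mem_union, mem_filter, mem_univ, true_and]
    omega
  have h₁ : (#S₁ : ℕ∞) ≤ fP (J r (k + 1)) m s :=
    card_le_fP S₁ (fun i hi => (mem_filter.1 hi).2) fun e he _ h =>
      hA (h.of_submatrix he (Fin.strictMono_castAdd n))
  have h₂ : (#S₂ : ℕ∞) ≤ fP (J r (k + 1)) n s :=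
    card_le_fP S₂ (fun i hi => (mem_filter.1 hi).2) fun e he _ h =>
      hA (h.of_submatrix he (Fin.strictMono_natAdd m))
  have h₃ : (#S₃ : ℕ∞) ≤ fP (J r k) m ((s + 1) / 2) :=
    card_le_fP S₃ (fun i hi => (mem_filter.1 hi).2.1) fun e he heS h =>
      hA <| IntervalMinor.of_submatrix he strictMono_id <| h.allOnes_succ_of_natAdd hr fun i => by
        simpa [filter_nonempty_iff] using card_pos.1 (mem_filter.1 (heS i)).2.2
  have h₄ : (#S₄ : ℕ∞) ≤ fP (J r k) n ((s + 1) / 2) :=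
    card_le_fP S₄ (fun i hi => (mem_filter.1 hi).2.1) fun e he heS h =>
      hA <| IntervalMinor.of_submatrix he strictMono_id <| h.allOnes_succ_of_castAdd hr fun i => by
        simpa [filter_nonempty_iff] using card_pos.1 (mem_filter.1 (heS i)).2.2
  calc (N : ℕ∞) = #(univ : Finset (Fin N)) := by simp
    _ ≤ #(S₁ ∪ S₂ ∪ S₃ ∪ S₄) := mod_cast card_le_card hcover
    _ ≤ #S₁ + #S₂ + #S₃ + #S₄ := by
      norm_cast
      grw [card_union_le, card_union_le, card_union_le]
    _ ≤ _ := by gcongr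

theorem stmt17_general (r k s t : ℕ) (hr : 0 < r) (hk : 2 ≤ k)
    (ht : Even t) :
    fP (J r k) t s ≤ 2 * fP (J r k) (t / 2) s + 2 * fP (J r (k - 1)) (t / 2) ((s + 1) / 2) := by
  obtain ⟨m, rfl⟩ := ht
  obtain ⟨k, rfl⟩ : ∃ k', k = k' + 1 := ⟨k - 1, by omega⟩
  rw [show (m + m) / 2 = m by omega, Nat.add_sub_cancel]
  exact (fP_allOnes_add_le hr).trans_eq (by ring)

/-- For all positive integers `r, k, s, t` with `k ≥ 2`, `s ≤ t`
and `t` even, `f_{r,k}(t,s) ≤ 2·f_{r,k}(t/2,s) + 2·f_{r,k−1}(t/2,⌈s/2⌉)` as an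
inequality of extended natural numbers. -/
theorem stmt17 (r k s t : ℕ) (hr : 0 < r) (hk : 2 ≤ k) (hs : 0 < s) (hst : s ≤ t)
    (ht : Even t) :
    fP (J r k) t s ≤ 2 * fP (J r k) (t / 2) s + 2 * fP (J r (k - 1)) (t / 2) ((s + 1) / 2) :=
  stmt17_general r k s t hr hk ht
end

section
/- For all positive integers r, k, s, t with t a power of 2 and 2^{k−1} ≤ s ≤ t, we have f_{r,k}(t,s) ≤ r·2^{k−1}·t²/s. -/
open Filter

/-! Induction on `t = 2 ^ i`, for all `k` and `s` at once. When `k ≤ 1`, `r` rows containing a one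
already contain `J r k`, so there are fewer than `r` rows. Otherwise halve the columns and put
`s' = ⌈s / 2⌉`: every row either has no one in one half, or has a one in one half and at least `s'`
ones in the other. Rows of the first kind form a submatrix of one half avoiding `J r k`; rows of the
second kind form a submatrix of one half avoiding `J r (k - 1)`, because the other half supplies one
more column interval. Each of the four classes then has at most `r 2^(k-1) (t/2)^2 / s` rows. -/

open Finset

def rowSupport {N t : ℕ} (A : Fin N → Fin t → Bool) (a : Fin N) : Finset (Fin t) :=
  univ.filter fun j => A a j = true

def leftCols {N m n : ℕ} (A : Fin N → Fin (m + n) → Bool) : Fin N → Fin m → Bool :=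
  fun a j => A a (Fin.castAdd n j)

def rightCols {N m n : ℕ} (A : Fin N → Fin (m + n) → Bool) : Fin N → Fin n → Bool :=
  fun a j => A a (Fin.natAdd m j)

def restrictRows {N t : ℕ} (A : Fin N → Fin t → Bool) (S : Finset (Fin N)) :
    Fin #S → Fin t → Bool :=
  fun b => A (S.orderEmbOfFin rfl b)

lemma card_rowSupport_le {N t : ℕ} (A : Fin N → Fin t → Bool) (a : Fin N) :
    #(rowSupport A a) ≤ t :=
  (card_filter_le _ _).trans_eq (card_fin t)

lemma card_rowSupport_add {N m n : ℕ} (A : Fin N → Fin (m + n) → Bool) (a : Fin N) :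
    #(rowSupport A a) = #(rowSupport (leftCols A) a) + #(rowSupport (rightCols A) a) := by
  simp only [rowSupport, card_filter]
  exact Fin.sum_univ_add _

namespace IntervalMinor

variable {k l N t : ℕ} {P : Fin k → Fin l → Bool}

lemma of_submatrix_s18 {M T : ℕ} {A : Fin N → Fin t → Bool} {e : Fin M → Fin N}
    {f : Fin T → Fin t} (he : StrictMono e) (hf : StrictMono f)
    (h : IntervalMinor P fun i j => A (e i) (f j)) : IntervalMinor P A := by
  obtain ⟨rlo, rhi, clo, chi, hr, hr', hc, hc', hblock⟩ := h
  refine ⟨e ∘ rlo, e ∘ rhi, f ∘ clo, f ∘ chi, fun a => he.monotone (hr a),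
    fun a b hab => he (hr' a b hab), fun a => hf.monotone (hc a),
    fun a b hab => hf (hc' a b hab), fun a b hp => ?_⟩
  obtain ⟨i, j, hi, hi', hj, hj', hij⟩ := hblock a b hp
  exact ⟨e i, f j, he.monotone hi, he.monotone hi', hf.monotone hj, hf.monotone hj', hij⟩

lemma of_restrictRows {A : Fin N → Fin t → Bool} {S : Finset (Fin N)}
    (h : IntervalMinor P (restrictRows A S)) : IntervalMinor P A :=
  of_submatrix_s18 (f := id) (S.orderEmbOfFin rfl).strictMono strictMono_id h

lemma of_leftCols {m n : ℕ} {A : Fin N → Fin (m + n) → Bool}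
    (h : IntervalMinor P (leftCols A)) : IntervalMinor P A :=
  of_submatrix_s18 (e := id) strictMono_id (Fin.strictMono_castAdd n) h

lemma of_rightCols {m n : ℕ} {A : Fin N → Fin (m + n) → Bool}
    (h : IntervalMinor P (rightCols A)) : IntervalMinor P A :=
  of_submatrix_s18 (e := id) strictMono_id (Fin.strictMono_natAdd m) h

lemma of_width_le_one (hl : l ≤ 1) (ht : 0 < t) {A : Fin N → Fin t → Bool} (hkN : k ≤ N)
    (hrow : ∀ a, ∃ j, A a j = true) : IntervalMinor P A := by
  refine ⟨Fin.castLE hkN, Fin.castLE hkN, fun _ => ⟨0, ht⟩, fun _ => ⟨t - 1, by omega⟩,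
    fun _ => le_rfl, fun a b hab => hab, fun _ => Fin.mk_le_mk.2 (Nat.zero_le _),
    fun a b hab => by omega, fun a b _ => ?_⟩
  obtain ⟨j, hj⟩ := hrow (Fin.castLE hkN a)
  exact ⟨_, j, le_rfl, le_rfl, Fin.mk_le_mk.2 (Nat.zero_le _), Fin.mk_le_mk.2 (by omega), hj⟩

lemma J_succ_of_leftCols {r m n : ℕ} (hn : 0 < n) {A : Fin N → Fin (m + n) → Bool}
    (hone : ∀ a, ∃ j, rightCols A a j = true) (h : IntervalMinor (J r k) (leftCols A)) :
    IntervalMinor (J r (k + 1)) A := by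
  obtain ⟨rlo, rhi, clo, chi, hr, hr', hc, hc', hblock⟩ := h
  refine ⟨rlo, rhi,
    Fin.snoc (α := fun _ => Fin (m + n)) (Fin.castAdd n ∘ clo) (Fin.natAdd m ⟨0, hn⟩),
    Fin.snoc (α := fun _ => Fin (m + n)) (Fin.castAdd n ∘ chi) (Fin.natAdd m ⟨n - 1, by omega⟩),
    hr, hr', fun b => ?_, fun b b' hbb' => ?_, fun a b _ => ?_⟩
  · induction b using Fin.lastCases with
    | last => simp only [Fin.snoc_last, Fin.le_def, Fin.val_natAdd]; omega
    | cast b =>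
      simpa only [Fin.snoc_castSucc, Function.comp_apply, Fin.le_def, Fin.val_castAdd] using hc b
  · induction b' using Fin.lastCases with
    | last =>
      induction b using Fin.lastCases with
      | last => exact absurd hbb' (lt_irrefl _)
      | cast b =>
        simp only [Fin.snoc_last, Fin.snoc_castSucc, Function.comp_apply, Fin.lt_def,
          Fin.val_natAdd, Fin.val_castAdd]
        omega
    | cast b' =>
      induction b using Fin.lastCases with
      | last => exact absurd hbb' (not_lt.2 (Fin.le_last _))
      | cast b =>
        simpa only [Fin.snoc_castSucc, Function.comp_apply, Fin.lt_def, Fin.val_castAdd]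
          using hc' b b' (Fin.castSucc_lt_castSucc_iff.mp hbb')
  · induction b using Fin.lastCases with
    | last =>
      obtain ⟨j, hj⟩ := hone (rlo a)
      refine ⟨rlo a, Fin.natAdd m j, le_rfl, hr a, ?_, ?_, hj⟩ <;>
        simp only [Fin.snoc_last, Fin.le_def, Fin.val_natAdd] <;> omega
    | cast b =>
      obtain ⟨i, j, hi, hi', hj, hj', hij⟩ := hblock a b rfl
      refine ⟨i, Fin.castAdd n j, hi, hi', ?_, ?_, hij⟩ <;>
        simpa only [Fin.snoc_castSucc, Function.comp_apply, Fin.le_def, Fin.val_castAdd]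

lemma J_succ_of_rightCols {r m n : ℕ} (hm : 0 < m) {A : Fin N → Fin (m + n) → Bool}
    (hone : ∀ a, ∃ j, leftCols A a j = true) (h : IntervalMinor (J r k) (rightCols A)) :
    IntervalMinor (J r (k + 1)) A := by
  obtain ⟨rlo, rhi, clo, chi, hr, hr', hc, hc', hblock⟩ := h
  refine ⟨rlo, rhi,
    Fin.cons (α := fun _ => Fin (m + n)) (Fin.castAdd n ⟨0, hm⟩) (Fin.natAdd m ∘ clo),
    Fin.cons (α := fun _ => Fin (m + n)) (Fin.castAdd n ⟨m - 1, by omega⟩) (Fin.natAdd m ∘ chi),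
    hr, hr', fun b => ?_, fun b b' hbb' => ?_, fun a b _ => ?_⟩
  · induction b using Fin.cases with
    | zero => simp only [Fin.cons_zero, Fin.le_def, Fin.val_castAdd]; omega
    | succ b =>
      have := hc b
      simp only [Fin.cons_succ, Function.comp_apply, Fin.le_def, Fin.val_natAdd] at this ⊢
      omega
  · induction b' using Fin.cases with
    | zero => exact absurd hbb' (Fin.not_lt_zero b)
    | succ b' =>
      induction b using Fin.cases with
      | zero =>
        simp only [Fin.cons_zero, Fin.cons_succ, Function.comp_apply, Fin.lt_def,
          Fin.val_natAdd, Fin.val_castAdd]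
        omega
      | succ b =>
        have := hc' b b' (Fin.succ_lt_succ_iff.mp hbb')
        simp only [Fin.cons_succ, Function.comp_apply, Fin.lt_def, Fin.val_natAdd] at this ⊢
        omega
  · induction b using Fin.cases with
    | zero =>
      obtain ⟨j, hj⟩ := hone (rlo a)
      refine ⟨rlo a, Fin.castAdd n j, le_rfl, hr a, ?_, ?_, hj⟩ <;>
        simp only [Fin.cons_zero, Fin.le_def, Fin.val_castAdd] <;> omega
    | succ b =>
      obtain ⟨i, j, hi, hi', hj, hj', hij⟩ := hblock a b rfl
      refine ⟨i, Fin.natAdd m j, hi, hi', ?_, ?_, hij⟩ <;>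
        simp only [Fin.cons_succ, Function.comp_apply, Fin.le_def, Fin.val_natAdd] at hj hj' ⊢ <;>
        omega

end IntervalMinor

lemma exists_of_card_rowSupport_pos {N t : ℕ} {A : Fin N → Fin t → Bool} {a : Fin N}
    (h : 0 < #(rowSupport A a)) : ∃ j, A a j = true := by
  obtain ⟨j, hj⟩ := card_pos.1 h
  exact ⟨j, (mem_filter.1 hj).2⟩

lemma card_mul_le_of_width_le_one {r k s N t : ℕ} {P : Fin r → Fin k → Bool} (hk : k ≤ 1)
    (hs : 0 < s) {A : Fin N → Fin t → Bool} (hrow : ∀ a, s ≤ #(rowSupport A a))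
    (hav : ¬ IntervalMinor P A) : N * s ≤ r * t := by
  obtain rfl | hN := N.eq_zero_or_pos
  · simp
  have hst : s ≤ t := (hrow ⟨0, hN⟩).trans (card_rowSupport_le A _)
  have hNr : N ≤ r := by
    by_contra! hrN
    exact hav (IntervalMinor.of_width_le_one hk (hs.trans_le hst) hrN.le
      fun a => exists_of_card_rowSupport_pos (hs.trans_le (hrow a)))
  exact Nat.mul_le_mul hNr hst

lemma card_le_of_rowSupport_split {N m n s : ℕ} (A : Fin N → Fin (m + n) → Bool)
    (hrow : ∀ a, s ≤ #(rowSupport A a)) :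
    N ≤ #{a | #(rowSupport (rightCols A) a) = 0} + #{a | #(rowSupport (leftCols A) a) = 0} +
      #{a | 0 < #(rowSupport (rightCols A) a) ∧ (s + 1) / 2 ≤ #(rowSupport (leftCols A) a)} +
      #{a | 0 < #(rowSupport (leftCols A) a) ∧ (s + 1) / 2 ≤ #(rowSupport (rightCols A) a)} := by
  refine (card_fin N).symm.le.trans <| (card_le_card fun a _ => ?_).trans <|
    (card_union_le _ _).trans <| Nat.add_le_add_right ((card_union_le _ _).trans <|
      Nat.add_le_add_right (card_union_le _ _) _) _
  have := (hrow a).trans_eq (card_rowSupport_add A a)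
  simp only [mem_union, mem_filter, mem_univ, true_and]
  omega

def JAvoidanceBound (r t : ℕ) : Prop :=
  ∀ (k s N : ℕ) (A : Fin N → Fin t → Bool), 2 ^ (k - 1) ≤ s → (∀ a, s ≤ #(rowSupport A a)) →
    ¬ IntervalMinor (J r k) A → N * s ≤ r * 2 ^ (k - 1) * t ^ 2

namespace JAvoidanceBound

variable {r m : ℕ}

lemma card_mul_le (h : JAvoidanceBound r m) {k s N : ℕ} {A : Fin N → Fin m → Bool}
    (S : Finset (Fin N)) (hks : 2 ^ (k - 1) ≤ s) (hrow : ∀ a ∈ S, s ≤ #(rowSupport A a))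
    (hav : ¬ IntervalMinor (J r k) (restrictRows A S)) : #S * s ≤ r * 2 ^ (k - 1) * m ^ 2 :=
  h k s #S _ hks (fun b => hrow _ (S.orderEmbOfFin_mem rfl b)) hav

lemma of_forall_two_le {t : ℕ} (h : ∀ (k s N : ℕ) (A : Fin N → Fin t → Bool), 2 ≤ k →
      2 ^ (k - 1) ≤ s → (∀ a, s ≤ #(rowSupport A a)) → ¬ IntervalMinor (J r k) A →
      N * s ≤ r * 2 ^ (k - 1) * t ^ 2) :
    JAvoidanceBound r t := by
  intro k s N A hks hrow hav
  rcases le_or_gt k 1 with hk | hk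
  · calc N * s ≤ r * t := card_mul_le_of_width_le_one hk (Nat.one_le_two_pow.trans hks) hrow hav
      _ ≤ r * 2 ^ (k - 1) * t ^ 2 := by
        rw [show k - 1 = 0 by omega, pow_zero, mul_one]
        exact Nat.mul_le_mul_left r (Nat.le_self_pow two_ne_zero t)
  · exact h k s N A hk hks hrow hav

lemma one : JAvoidanceBound r 1 := by
  refine of_forall_two_le fun k s N A hk hks hrow hav => ?_
  obtain rfl | hN := N.eq_zero_or_pos
  · simp
  have h2 : 2 ≤ 2 ^ (k - 1) := Nat.le_self_pow (by omega) 2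
  have := (hrow ⟨0, hN⟩).trans (card_rowSupport_le A _)
  omega

lemma double (hm : 0 < m) (h : JAvoidanceBound r m) : JAvoidanceBound r (m + m) := by
  refine of_forall_two_le fun k s N A hk hks hrow hav => ?_
  obtain ⟨k, rfl⟩ : ∃ k', k = k' + 2 := ⟨k - 2, by omega⟩
  have hcover := card_le_of_rowSupport_split A hrow
  set s' := (s + 1) / 2
  set S₁ : Finset (Fin N) := {a | #(rowSupport (rightCols A) a) = 0}
  set S₂ : Finset (Fin N) := {a | #(rowSupport (leftCols A) a) = 0}
  set S₃ : Finset (Fin N) :=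
    {a | 0 < #(rowSupport (rightCols A) a) ∧ s' ≤ #(rowSupport (leftCols A) a)}
  set S₄ : Finset (Fin N) :=
    {a | 0 < #(rowSupport (leftCols A) a) ∧ s' ≤ #(rowSupport (rightCols A) a)}
  have hLR : ∀ a, s ≤ #(rowSupport (leftCols A) a) + #(rowSupport (rightCols A) a) :=
    fun a => (hrow a).trans_eq (card_rowSupport_add A a)
  have hks' : 2 ^ (k + 1 - 1) ≤ s' := by
    rw [Nat.add_sub_cancel]
    rw [show k + 2 - 1 = k + 1 from rfl, pow_succ] at hks
    omega
  have h₁ : #S₁ * s ≤ r * 2 ^ (k + 1) * m ^ 2 :=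
    h.card_mul_le S₁ hks (fun a ha => by have := (mem_filter.1 ha).2; have := hLR a; omega)
      fun hc => hav hc.of_restrictRows.of_leftCols
  have h₂ : #S₂ * s ≤ r * 2 ^ (k + 1) * m ^ 2 :=
    h.card_mul_le S₂ hks (fun a ha => by have := (mem_filter.1 ha).2; have := hLR a; omega)
      fun hc => hav hc.of_restrictRows.of_rightCols
  have h₃ : #S₃ * s' ≤ r * 2 ^ k * m ^ 2 :=
    h.card_mul_le S₃ hks' (fun a ha => (mem_filter.1 ha).2.2) fun hc => hav <|
      (IntervalMinor.J_succ_of_leftCols hm (fun b => exists_of_card_rowSupport_pos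
        (mem_filter.1 (S₃.orderEmbOfFin_mem rfl b)).2.1) hc).of_restrictRows
  have h₄ : #S₄ * s' ≤ r * 2 ^ k * m ^ 2 :=
    h.card_mul_le S₄ hks' (fun a ha => (mem_filter.1 ha).2.2) fun hc => hav <|
      (IntervalMinor.J_succ_of_rightCols hm (fun b => exists_of_card_rowSupport_pos
        (mem_filter.1 (S₄.orderEmbOfFin_mem rfl b)).2.1) hc).of_restrictRows
  have hss' : s ≤ 2 * s' := by omega
  have h₃' := Nat.mul_le_mul_left #S₃ hss'
  have h₄' := Nat.mul_le_mul_left #S₄ hss'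
  calc N * s ≤ (#S₁ + #S₂ + #S₃ + #S₄) * s := Nat.mul_le_mul_right s hcover
    _ ≤ 8 * (r * 2 ^ k * m ^ 2) := by rw [pow_succ] at h₁ h₂; linarith
    _ = r * 2 ^ (k + 2 - 1) * (m + m) ^ 2 := by rw [show k + 2 - 1 = k + 1 from rfl]; ring

lemma two_pow (i : ℕ) : JAvoidanceBound r (2 ^ i) := by
  induction i with
  | zero => exact one
  | succ i ih =>
    rw [pow_succ, mul_two]
    exact ih.double (Nat.two_pow_pos i)

end JAvoidanceBound

theorem stmt18_general (r k s t : ℕ) (hs : 0 < s)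
    (htpow : ∃ i : ℕ, t = 2 ^ i) (hsl : 2 ^ (k - 1) ≤ s) :
    fP (J r k) t s ≤ ((r * 2 ^ (k - 1) * t ^ 2 / s : ℕ) : ℕ∞) := by
  obtain ⟨i, rfl⟩ := htpow
  refine sSup_le ?_
  rintro _ ⟨N, rfl, A, hrow, hav⟩
  have hN := JAvoidanceBound.two_pow i k s N A hsl hrow hav
  exact_mod_cast (Nat.le_div_iff_mul_le hs).2 hN

/-- For all positive integers `r, k, s, t` with `t` a power of 2
and `2^{k−1} ≤ s ≤ t`, we have `f_{r,k}(t,s) ≤ r·2^{k−1}·t²/s`. (Since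
`f_{r,k}(t,s)` is an extended natural number, this is equivalent to the bound
with the floor `r·2^{k−1}·t²/s` taken in the natural numbers.) -/
theorem stmt18 (r k s t : ℕ) (hr : 0 < r) (hk : 0 < k) (hs : 0 < s)
    (htpow : ∃ i : ℕ, t = 2 ^ i) (hsl : 2 ^ (k - 1) ≤ s) (hst : s ≤ t) :
    fP (J r k) t s ≤ ((r * 2 ^ (k - 1) * t ^ 2 / s : ℕ) : ℕ∞) :=
  stmt18_general r k s t hs htpow hsl
end
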